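/- Let 1 ≤ θ₁ ≤ θ₂ be such that Q_n(θ₁) > 0 for all n, and define M_n(θ) := ∑_{j=0}^n (1/(p_j(θ) π_j(θ))) ∑_{k=0}^j r_k(θ) π_k(θ), where p_j(θ) = (Q_{j+1}(θ)/Q_j(θ)) p_j/θ, r_j(θ) = r_j/θ, q_{j+1}(θ) = (Q_j(θ)/Q_{j+1}(θ)) q_{j+1}/θ and π_n(θ) = π_n Q_n(θ)^2. Then M_n(θ₁) ≥ M_n(θ₂) for every n ≥ 0. -/

import Mathlib

/-!
Summation by parts of the three-term recurrence gives
`p_n π_n (Q_{n+1}(x) - Q_n(x)) = (x - 1) ∑_{k ≤ n} π_k Q_k(x)`, so `Q_n(x) ≥ 1` for `x ≥ 1`.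
Solving the recurrence for `Q_{n+2}/Q_{n+1}` shows by induction that each ratio `Q_{n+1}(x)/Q_n(x)`
increases with `x`, hence `Q_k(x)/Q_j(x)` decreases for `k ≤ j`. After cancelling `θ`, the
`(j, k)` term of `M_n(θ)` is `r_k π_k / (p_j π_j) · (Q_k/Q_j)(Q_k/Q_{j+1})` evaluated at `θ`,
a nonnegative constant times a product of two such decreasing ratios.
-/

open Finset

namespace RandomWalkPolynomial

variable {p q r π : ℕ → ℝ} {Q : ℕ → ℝ → ℝ}

theorem pi_pos (hp : ∀ j, 0 < p j) (hq : ∀ j, 0 < q (j + 1)) (hπ0 : π 0 = 1)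
    (hπ : ∀ n, π (n + 1) = π n * (p n / q (n + 1))) (n : ℕ) : 0 < π n := by
  induction n with
  | zero => rw [hπ0]; exact one_pos
  | succ n ih => rw [hπ n]; exact mul_pos ih (div_pos (hp n) (hq n))

theorem q_succ_mul_pi_succ (hq : ∀ j, 0 < q (j + 1))
    (hπ : ∀ n, π (n + 1) = π n * (p n / q (n + 1))) (n : ℕ) :
    q (n + 1) * π (n + 1) = p n * π n := by
  rw [hπ n]
  field_simp [(hq n).ne']

theorem p_mul_pi_mul_Q_succ_sub (hq : ∀ j, 0 < q (j + 1)) (hq0 : q 0 = 0)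
    (hs : ∀ j, p j + q j + r j = 1) (hQ0 : ∀ x : ℝ, Q 0 x = 1)
    (hQ1 : ∀ x : ℝ, p 0 * Q 1 x = x - r 0)
    (hQrec : ∀ n : ℕ, ∀ x : ℝ, x * Q (n + 1) x =
      q (n + 1) * Q n x + r (n + 1) * Q (n + 1) x + p (n + 1) * Q (n + 2) x)
    (hπ0 : π 0 = 1) (hπ : ∀ n, π (n + 1) = π n * (p n / q (n + 1))) (x : ℝ) (n : ℕ) :
    p n * π n * (Q (n + 1) x - Q n x) = (x - 1) * ∑ k ∈ range (n + 1), π k * Q k x := by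
  induction n with
  | zero =>
    simp only [zero_add, sum_range_one, hQ0, hπ0]
    linear_combination hQ1 x - hs 0 + hq0
  | succ n ih =>
    rw [sum_range_succ]
    linear_combination -π (n + 1) * hQrec n x + ih
      + (Q (n + 1) x - Q n x) * q_succ_mul_pi_succ hq hπ n - π (n + 1) * Q (n + 1) x * hs (n + 1)

theorem one_le_Q (hp : ∀ j, 0 < p j) (hq : ∀ j, 0 < q (j + 1)) (hq0 : q 0 = 0)
    (hs : ∀ j, p j + q j + r j = 1) (hQ0 : ∀ x : ℝ, Q 0 x = 1)
    (hQ1 : ∀ x : ℝ, p 0 * Q 1 x = x - r 0)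
    (hQrec : ∀ n : ℕ, ∀ x : ℝ, x * Q (n + 1) x =
      q (n + 1) * Q n x + r (n + 1) * Q (n + 1) x + p (n + 1) * Q (n + 2) x)
    (hπ0 : π 0 = 1) (hπ : ∀ n, π (n + 1) = π n * (p n / q (n + 1)))
    {x : ℝ} (hx : 1 ≤ x) (n : ℕ) : 1 ≤ Q n x := by
  induction n using Nat.strong_induction_on with
  | _ n ih =>
    cases n with
    | zero => rw [hQ0]
    | succ n =>
      have hsum : 0 ≤ ∑ k ∈ range (n + 1), π k * Q k x :=
        sum_nonneg fun k hk => mul_nonneg (pi_pos hp hq hπ0 hπ k).le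
          (zero_le_one.trans (ih k (by simp at hk; omega)))
      have hstep : 0 ≤ p n * π n * (Q (n + 1) x - Q n x) := by
        rw [p_mul_pi_mul_Q_succ_sub hq hq0 hs hQ0 hQ1 hQrec hπ0 hπ]
        exact mul_nonneg (sub_nonneg.mpr hx) hsum
      have hpπ : 0 < p n * π n := mul_pos (hp n) (pi_pos hp hq hπ0 hπ n)
      linarith [ih n n.lt_succ_self, (mul_nonneg_iff_of_pos_left hpπ).mp hstep]

theorem Q_succ_div_Q_le (hp : ∀ j, 0 < p j) (hq : ∀ j, 0 < q (j + 1))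
    (hQ0 : ∀ x : ℝ, Q 0 x = 1) (hQ1 : ∀ x : ℝ, p 0 * Q 1 x = x - r 0)
    (hQrec : ∀ n : ℕ, ∀ x : ℝ, x * Q (n + 1) x =
      q (n + 1) * Q n x + r (n + 1) * Q (n + 1) x + p (n + 1) * Q (n + 2) x)
    {x y : ℝ} (hxy : x ≤ y) (hx : ∀ n, 0 < Q n x) (hy : ∀ n, 0 < Q n y) (n : ℕ) :
    Q (n + 1) x / Q n x ≤ Q (n + 1) y / Q n y := by
  have ratio_succ : ∀ z, (∀ n, 0 < Q n z) → ∀ n, Q (n + 2) z / Q (n + 1) z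
      = (z - r (n + 1) - q (n + 1) * (Q n z / Q (n + 1) z)) / p (n + 1) := by
    intro z hz n
    field_simp [(hz (n + 1)).ne', (hp (n + 1)).ne']
    linear_combination -hQrec n z
  induction n with
  | zero =>
    rw [hQ0, hQ0, div_one, div_one]
    nlinarith [hQ1 x, hQ1 y, hp 0]
  | succ n ih =>
    rw [ratio_succ x hx, ratio_succ y hy]
    have hinv : Q n y / Q (n + 1) y ≤ Q n x / Q (n + 1) x := by
      simpa only [inv_div] using inv_anti₀ (div_pos (hx (n + 1)) (hx n)) ih
    gcongr
    · exact (hp (n + 1)).le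
    · exact (hq n).le

theorem Q_div_Q_le (hp : ∀ j, 0 < p j) (hq : ∀ j, 0 < q (j + 1))
    (hQ0 : ∀ x : ℝ, Q 0 x = 1) (hQ1 : ∀ x : ℝ, p 0 * Q 1 x = x - r 0)
    (hQrec : ∀ n : ℕ, ∀ x : ℝ, x * Q (n + 1) x =
      q (n + 1) * Q n x + r (n + 1) * Q (n + 1) x + p (n + 1) * Q (n + 2) x)
    {x y : ℝ} (hxy : x ≤ y) (hx : ∀ n, 0 < Q n x) (hy : ∀ n, 0 < Q n y)
    {k j : ℕ} (hkj : k ≤ j) : Q k y / Q j y ≤ Q k x / Q j x := by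
  suffices Q j x / Q k x ≤ Q j y / Q k y by
    simpa only [inv_div] using inv_anti₀ (div_pos (hx j) (hx k)) this
  induction j, hkj using Nat.le_induction with
  | base => rw [div_self (hx k).ne', div_self (hy k).ne']
  | succ j _ ih =>
    have split : ∀ z, (∀ n, 0 < Q n z) →
        Q (j + 1) z / Q k z = Q j z / Q k z * (Q (j + 1) z / Q j z) := fun z hz => by
      field_simp [(hz j).ne', (hz k).ne']
    rw [split x hx, split y hy]
    exact mul_le_mul ih (Q_succ_div_Q_le hp hq hQ0 hQ1 hQrec hxy hx hy j)
      (div_pos (hx (j + 1)) (hx j)).le (div_pos (hy j) (hy k)).le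

theorem summand_eq_sum_mul_Q_div (hp : ∀ j, 0 < p j) (hπ : ∀ n, 0 < π n) {θ : ℝ} (hθ : θ ≠ 0)
    (hQ : ∀ n, Q n θ ≠ 0) (j : ℕ) :
    1 / ((Q (j + 1) θ / Q j θ * p j / θ) * (π j * (Q j θ) ^ 2)) *
        ∑ k ∈ range (j + 1), (r k / θ) * (π k * (Q k θ) ^ 2) =
      ∑ k ∈ range (j + 1), r k * π k / (p j * π j) * (Q k θ / Q j θ * (Q k θ / Q (j + 1) θ)) := by
  rw [mul_sum]
  refine sum_congr rfl fun k _ => ?_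
  field_simp [hQ j, hQ (j + 1), (hp j).ne', (hπ j).ne']

end RandomWalkPolynomial

open RandomWalkPolynomial

theorem stmt17_general (p q r : ℕ → ℝ) (Q : ℕ → ℝ → ℝ)
    (hp : ∀ j, 0 < p j) (hq : ∀ j, 0 < q (j + 1)) (hr : ∀ j, 0 ≤ r j)
    (hq0 : q 0 = 0) (hs : ∀ j, p j + q j + r j = 1)
    (hQ0 : ∀ x : ℝ, Q 0 x = 1) (hQ1 : ∀ x : ℝ, p 0 * Q 1 x = x - r 0)
    (hQrec : ∀ n : ℕ, ∀ x : ℝ, x * Q (n + 1) x =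
      q (n + 1) * Q n x + r (n + 1) * Q (n + 1) x + p (n + 1) * Q (n + 2) x)
    (π : ℕ → ℝ) (hπ0 : π 0 = 1) (hπ : ∀ n, π (n + 1) = π n * (p n / q (n + 1)))
    (θ₁ θ₂ : ℝ) (h1 : 1 ≤ θ₁) (h12 : θ₁ ≤ θ₂) :
    ∀ n : ℕ,
      ∑ j ∈ Finset.range (n + 1),
          (1 / ((Q (j + 1) θ₁ / Q j θ₁ * p j / θ₁) * (π j * (Q j θ₁) ^ 2))) *
            ∑ k ∈ Finset.range (j + 1), (r k / θ₁) * (π k * (Q k θ₁) ^ 2) ≥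
        ∑ j ∈ Finset.range (n + 1),
          (1 / ((Q (j + 1) θ₂ / Q j θ₂ * p j / θ₂) * (π j * (Q j θ₂) ^ 2))) *
            ∑ k ∈ Finset.range (j + 1), (r k / θ₂) * (π k * (Q k θ₂) ^ 2) := by
  have hπpos := pi_pos hp hq hπ0 hπ
  have hQpos : ∀ {θ : ℝ}, θ₁ ≤ θ → ∀ n, 0 < Q n θ := fun hθ n =>
    zero_lt_one.trans_le (one_le_Q hp hq hq0 hs hQ0 hQ1 hQrec hπ0 hπ (h1.trans hθ) n)
  have hQ₁ := hQpos le_rfl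
  have hQ₂ := hQpos h12
  intro n
  refine sum_le_sum fun j _ => ?_
  rw [summand_eq_sum_mul_Q_div hp hπpos (by linarith) (fun n => (hQ₁ n).ne'),
    summand_eq_sum_mul_Q_div hp hπpos (by linarith) (fun n => (hQ₂ n).ne')]
  refine sum_le_sum fun k hk => ?_
  have hkj : k ≤ j := Nat.lt_succ_iff.mp (mem_range.mp hk)
  have hdecr := fun {i} (hki : k ≤ i) => Q_div_Q_le hp hq hQ0 hQ1 hQrec h12 hQ₁ hQ₂ hki
  gcongr ?_ * ?_
  · exact div_nonneg (mul_nonneg (hr k) (hπpos k).le) (mul_pos (hp j) (hπpos j)).le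
  · exact mul_le_mul (hdecr hkj) (hdecr hkj.step) (div_pos (hQ₂ k) (hQ₂ (j + 1))).le
      (div_pos (hQ₁ k) (hQ₁ j)).le

theorem stmt17 (p q r : ℕ → ℝ) (Q : ℕ → ℝ → ℝ)
    (hp : ∀ j, 0 < p j) (hq : ∀ j, 0 < q (j + 1)) (hr : ∀ j, 0 ≤ r j)
    (hq0 : q 0 = 0) (hs : ∀ j, p j + q j + r j = 1)
    (hQ0 : ∀ x : ℝ, Q 0 x = 1) (hQ1 : ∀ x : ℝ, p 0 * Q 1 x = x - r 0)
    (hQrec : ∀ n : ℕ, ∀ x : ℝ, x * Q (n + 1) x =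
      q (n + 1) * Q n x + r (n + 1) * Q (n + 1) x + p (n + 1) * Q (n + 2) x)
    (π : ℕ → ℝ) (hπ0 : π 0 = 1) (hπ : ∀ n, π (n + 1) = π n * (p n / q (n + 1)))
    (θ₁ θ₂ : ℝ) (h1 : 1 ≤ θ₁) (h12 : θ₁ ≤ θ₂) (hQθ₁ : ∀ n, 0 < Q n θ₁) :
    ∀ n : ℕ,
      ∑ j ∈ Finset.range (n + 1),
          (1 / ((Q (j + 1) θ₁ / Q j θ₁ * p j / θ₁) * (π j * (Q j θ₁) ^ 2))) *
            ∑ k ∈ Finset.range (j + 1), (r k / θ₁) * (π k * (Q k θ₁) ^ 2) ≥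
        ∑ j ∈ Finset.range (n + 1),
          (1 / ((Q (j + 1) θ₂ / Q j θ₂ * p j / θ₂) * (π j * (Q j θ₂) ^ 2))) *
            ∑ k ∈ Finset.range (j + 1), (r k / θ₂) * (π k * (Q k θ₂) ^ 2) :=
  stmt17_general p q r Q hp hq hr hq0 hs hQ0 hQ1 hQrec π hπ0 hπ θ₁ θ₂ h1 h12
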